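/- Let k be a field, V a finite-dimensional k-vector space, and R : V ⊗ V → V ⊗ V an invertible linear map satisfying the braid equation. Let B be a k-bialgebra and c : V → V ⊗ B a coaction ((c ⊗ id_B) ∘ c = (id_V ⊗ Δ_B) ∘ c and (id_V ⊗ ε_B) ∘ c = id_V). Let c₂ : V ⊗ V → V ⊗ V ⊗ B be the induced coaction on V ⊗ V, c₂ = (id_V ⊗ id_V ⊗ m_B) ∘ (id_V ⊗ swap_{B,V} ⊗ id_B) ∘ (c ⊗ c). Define φ : V* ⊗ V → B by φ(f ⊗ v) = (f ⊗ id_B)(c(v)). Let τ : V* ⊗ V ⊗ V* ⊗ V → V* ⊗ V* ⊗ V ⊗ V be the isomorphism swapping the second and third tensor factors, let R^t : V* ⊗ V* → V* ⊗ V* be the map corresponding to the dual of R under the canonical isomorphism V* ⊗ V* ≅ (V ⊗ V)*, and set α = τ⁻¹ ∘ (R^t ⊗ id_{V ⊗ V}) ∘ τ and β = τ⁻¹ ∘ (id_{V* ⊗ V*} ⊗ R) ∘ τ, both endomorphisms of V* ⊗ V ⊗ V* ⊗ V. Then the coaction c is admissible, meaning (R ⊗ id_B) ∘ c₂ = c₂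 ∘ R, if and only if m_B ∘ (φ ⊗ φ) ∘ α = m_B ∘ (φ ⊗ φ) ∘ β. -/
import Mathlib


open TensorProduct

universe u

variable {k : Type u} [Field k]

/-- `f ⊗ id` as an endomorphism of `M ⊗ (M ⊗ M)`, i.e. `f` acting on the first two factors. -/
noncomputable def braidLeft {M : Type u} [AddCommGroup M] [Module k M]
    (f : M ⊗[k] M →ₗ[k] M ⊗[k] M) :
    M ⊗[k] (M ⊗[k] M) →ₗ[k] M ⊗[k] (M ⊗[k] M) :=
  (TensorProduct.assoc k M M M).toLinearMap ∘ₗ f.rTensor M ∘ₗ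
    (TensorProduct.assoc k M M M).symm.toLinearMap

/-- `id ⊗ f` as an endomorphism of `M ⊗ (M ⊗ M)`, i.e. `f` acting on the last two factors. -/
noncomputable def braidRight {M : Type u} [AddCommGroup M] [Module k M]
    (f : M ⊗[k] M →ₗ[k] M ⊗[k] M) :
    M ⊗[k] (M ⊗[k] M) →ₗ[k] M ⊗[k] (M ⊗[k] M) :=
  f.lTensor M

/-- The braid equation `(id ⊗ f)(f ⊗ id)(id ⊗ f) = (f ⊗ id)(id ⊗ f)(f ⊗ id)` on `M ⊗ M ⊗ M`. -/
noncomputable def SatisfiesBraidEquation {M : Type u} [AddCommGroup M] [Module k M]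
    (f : M ⊗[k] M →ₗ[k] M ⊗[k] M) : Prop :=
  braidRight f ∘ₗ braidLeft f ∘ₗ braidRight f = braidLeft f ∘ₗ braidRight f ∘ₗ braidLeft f

section Admissible

variable (V B : Type u) [AddCommGroup V] [Module k V] [Ring B] [Bialgebra k B]

/-- The coaction on `V ⊗ V` induced by a coaction `c : V → V ⊗ B`:
`c₂ = (id ⊗ id ⊗ m_B) ∘ (id ⊗ swap ⊗ id) ∘ (c ⊗ c)`. -/
noncomputable def coactionSq (c : V →ₗ[k] V ⊗[k] B) :
    V ⊗[k] V →ₗ[k] (V ⊗[k] V) ⊗[k] B :=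
  (LinearMap.mul' k B).lTensor (V ⊗[k] V) ∘ₗ
    (TensorProduct.tensorTensorTensorComm k V B V B).toLinearMap ∘ₗ
    TensorProduct.map c c

/-- The map `φ : V* ⊗ V → B`, `φ(f ⊗ v) = (f ⊗ id_B)(c v)`. -/
noncomputable def coactionPhi (c : V →ₗ[k] V ⊗[k] B) :
    Module.Dual k V ⊗[k] V →ₗ[k] B :=
  (TensorProduct.lid k B).toLinearMap ∘ₗ
    (contractLeft k V).rTensor B ∘ₗ
    (TensorProduct.assoc k (Module.Dual k V) V B).symm.toLinearMap ∘ₗ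
    c.lTensor (Module.Dual k V)

/-- The middle-factor swap `τ : (V* ⊗ V) ⊗ (V* ⊗ V) ≃ (V* ⊗ V*) ⊗ (V ⊗ V)`. -/
noncomputable def midSwap :
    (Module.Dual k V ⊗[k] V) ⊗[k] (Module.Dual k V ⊗[k] V) ≃ₗ[k]
      (Module.Dual k V ⊗[k] Module.Dual k V) ⊗[k] (V ⊗[k] V) :=
  TensorProduct.tensorTensorTensorComm k (Module.Dual k V) V (Module.Dual k V) V

/-- The transpose braiding `Rᵗ : V* ⊗ V* → V* ⊗ V*`, corresponding to the dual map of `R`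
under the canonical isomorphism `V* ⊗ V* ≅ (V ⊗ V)*` (for finite-dimensional `V`). -/
noncomputable def braidTranspose [FiniteDimensional k V]
    (R : V ⊗[k] V →ₗ[k] V ⊗[k] V) :
    Module.Dual k V ⊗[k] Module.Dual k V →ₗ[k] Module.Dual k V ⊗[k] Module.Dual k V :=
  (TensorProduct.dualDistribEquiv k V V).symm.toLinearMap ∘ₗ R.dualMap ∘ₗ
    (TensorProduct.dualDistribEquiv k V V).toLinearMap

/-- The endomorphism `α = τ⁻¹ ∘ (Rᵗ ⊗ id) ∘ τ` of `V* ⊗ V ⊗ V* ⊗ V`. -/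
noncomputable def alphaMap [FiniteDimensional k V] (R : V ⊗[k] V →ₗ[k] V ⊗[k] V) :
    (Module.Dual k V ⊗[k] V) ⊗[k] (Module.Dual k V ⊗[k] V) →ₗ[k]
      (Module.Dual k V ⊗[k] V) ⊗[k] (Module.Dual k V ⊗[k] V) :=
  (midSwap V).symm.toLinearMap ∘ₗ
    (braidTranspose V R).rTensor (V ⊗[k] V) ∘ₗ (midSwap V).toLinearMap

/-- The endomorphism `β = τ⁻¹ ∘ (id ⊗ R) ∘ τ` of `V* ⊗ V ⊗ V* ⊗ V`. -/
noncomputable def betaMap (R : V ⊗[k] V →ₗ[k] V ⊗[k] V) :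
    (Module.Dual k V ⊗[k] V) ⊗[k] (Module.Dual k V ⊗[k] V) →ₗ[k]
      (Module.Dual k V ⊗[k] V) ⊗[k] (Module.Dual k V ⊗[k] V) :=
  (midSwap V).symm.toLinearMap ∘ₗ
    R.lTensor (Module.Dual k V ⊗[k] Module.Dual k V) ∘ₗ (midSwap V).toLinearMap

end Admissible

section PsiAux
variable (W : Type u) [AddCommGroup W] [Module k W]
variable (C : Type u) [AddCommGroup C] [Module k C]

noncomputable def psiAux : Module.Dual k W ⊗[k] (W ⊗[k] C) →ₗ[k] C :=
  (TensorProduct.lid k C).toLinearMap ∘ₗ (contractLeft k W).rTensor C ∘ₗ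
    (TensorProduct.assoc k (Module.Dual k W) W C).symm.toLinearMap

@[simp] lemma psiAux_tmul (g : Module.Dual k W) (t : W) (b : C) :
    psiAux W C (g ⊗ₜ (t ⊗ₜ b)) = g t • b := by
  simp [psiAux]

lemma psiAux_dualMap (S : W →ₗ[k] W) (g : Module.Dual k W) (z : W ⊗[k] C) :
    psiAux W C (S.dualMap g ⊗ₜ z) = psiAux W C (g ⊗ₜ S.rTensor C z) := by
  induction z using TensorProduct.induction_on with
  | zero => simp
  | tmul t b => simp
  | add x y hx hy => simp [tmul_add, hx, hy]

lemma psiAux_eq_zero [FiniteDimensional k W] (y : W ⊗[k] C)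
    (h : ∀ g : Module.Dual k W, psiAux W C (g ⊗ₜ y) = 0) : y = 0 := by
  have key : ∀ z : W ⊗[k] C, ∀ g : Module.Dual k W,
      dualTensorHom k (Module.Dual k W) C
        ((Module.Dual.eval k W).rTensor C z) g = psiAux W C (g ⊗ₜ z) := by
    intro z g
    induction z using TensorProduct.induction_on with
    | zero => simp
    | tmul t b => simp
    | add x y hx hy => simp [tmul_add, hx, hy]
  have hinj : Function.Injective
      ((dualTensorHom k (Module.Dual k W) C) ∘ₗ (Module.Dual.eval k W).rTensor C) := by
    have h1 : Function.Injective (dualTensorHom k (Module.Dual k W) C) :=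
      (dualTensorHomEquiv k (Module.Dual k W) C).injective
    have h2 : Function.Injective ((Module.Dual.eval k W).rTensor C) :=
      (LinearEquiv.rTensor C (Module.evalEquiv k W)).injective
    exact h1.comp h2
  have : ((dualTensorHom k (Module.Dual k W) C) ∘ₗ (Module.Dual.eval k W).rTensor C) y = 0 := by
    ext g; simpa [key] using h g
  simpa using hinj (by simpa using this)
end PsiAux

section Main
variable (V B : Type u) [AddCommGroup V] [Module k V] [Ring B] [Bialgebra k B]

/-- The pairing `(V*⊗V*) ⊗ ((V⊗V)⊗B) → B` via `dualDistribEquiv`. -/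
noncomputable def psiTwo [FiniteDimensional k V] :
    (Module.Dual k V ⊗[k] Module.Dual k V) ⊗[k] ((V ⊗[k] V) ⊗[k] B) →ₗ[k] B :=
  psiAux (V ⊗[k] V) B ∘ₗ
    ((TensorProduct.dualDistribEquiv k V V).toLinearMap).rTensor ((V ⊗[k] V) ⊗[k] B)

@[simp] lemma psiTwo_tmul [FiniteDimensional k V]
    (h : Module.Dual k V ⊗[k] Module.Dual k V) (z : (V ⊗[k] V) ⊗[k] B) :
    psiTwo V B (h ⊗ₜ z) = psiAux (V ⊗[k] V) B ((TensorProduct.dualDistribEquiv k V V h) ⊗ₜ z) := by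
  simp [psiTwo]

lemma coactionPhi_tmul (c : V →ₗ[k] V ⊗[k] B) (f : Module.Dual k V) (x : V) :
    coactionPhi V B c (f ⊗ₜ x) = psiAux V B (f ⊗ₜ c x) := by
  simp [coactionPhi, psiAux]

lemma dualDistribEquiv_tmul_apply (f g : Module.Dual k V) (x y : V) [FiniteDimensional k V] :
    TensorProduct.dualDistribEquiv k V V (f ⊗ₜ g) (x ⊗ₜ y) = f x * g y := rfl

lemma L1aux [FiniteDimensional k V] (f g : Module.Dual k V) (u w : V ⊗[k] B) :
    psiAux V B (f ⊗ₜ u) * psiAux V B (g ⊗ₜ w) =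
      psiTwo V B ((f ⊗ₜ g) ⊗ₜ ((LinearMap.mul' k B).lTensor (V ⊗[k] V)
        (tensorTensorTensorComm k V B V B (u ⊗ₜ w)))) := by
  induction u using TensorProduct.induction_on with
  | zero => simp only [tmul_zero, zero_tmul, map_zero, zero_mul]
  | add u₁ u₂ h1 h2 =>
      simp only [tmul_add, add_tmul, map_add, add_mul, h1, h2]
  | tmul v b =>
    induction w using TensorProduct.induction_on with
    | zero => simp only [tmul_zero, zero_tmul, map_zero, mul_zero]
    | add w₁ w₂ h1 h2 =>
        simp only [tmul_add, add_tmul, map_add, mul_add, h1, h2]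
    | tmul v' b' =>
        rw [tensorTensorTensorComm_tmul, LinearMap.lTensor_tmul, LinearMap.mul'_apply,
          psiTwo_tmul, psiAux_tmul, psiAux_tmul, psiAux_tmul, dualDistribEquiv_tmul_apply,
          smul_mul_smul_comm, mul_smul]

/-- Lemma L1. -/
lemma L1 [FiniteDimensional k V] (c : V →ₗ[k] V ⊗[k] B) :
    LinearMap.mul' k B ∘ₗ TensorProduct.map (coactionPhi V B c) (coactionPhi V B c) ∘ₗ
        (midSwap V).symm.toLinearMap =
      psiTwo V B ∘ₗ (coactionSq V B c).lTensor (Module.Dual k V ⊗[k] Module.Dual k V) := by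
  apply TensorProduct.ext_fourfold'
  intro f g x y
  have hswap : (midSwap V).symm ((f ⊗ₜ g) ⊗ₜ (x ⊗ₜ y)) = (f ⊗ₜ x) ⊗ₜ (g ⊗ₜ y) := by
    simp [midSwap, tensorTensorTensorComm_symm, tensorTensorTensorComm_tmul]
  simp only [LinearMap.comp_apply, LinearEquiv.coe_coe, hswap, map_tmul,
    LinearMap.lTensor_tmul, coactionPhi_tmul, coactionSq, LinearMap.mul'_apply]
  exact L1aux V B f g (c x) (c y)

/-- Lemma L2. -/
lemma L2 [FiniteDimensional k V] (R : V ⊗[k] V →ₗ[k] V ⊗[k] V) :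
    psiTwo V B ∘ₗ (braidTranspose V R).rTensor ((V ⊗[k] V) ⊗[k] B) =
      psiTwo V B ∘ₗ (R.rTensor B).lTensor (Module.Dual k V ⊗[k] Module.Dual k V) := by
  apply TensorProduct.ext'
  intro h z
  have hd : TensorProduct.dualDistribEquiv k V V (braidTranspose V R h) =
      R.dualMap (TensorProduct.dualDistribEquiv k V V h) := by
    rw [braidTranspose]
    simp only [LinearMap.comp_apply, LinearEquiv.coe_coe]
    exact (TensorProduct.dualDistribEquiv k V V).apply_symm_apply _
  simp only [LinearMap.comp_apply, LinearMap.rTensor_tmul, LinearMap.lTensor_tmul,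
    psiTwo_tmul, hd, psiAux_dualMap]

/-- Lemma L3: injectivity. -/
lemma L3 [FiniteDimensional k V] {F G : V ⊗[k] V →ₗ[k] (V ⊗[k] V) ⊗[k] B}
    (h : psiTwo V B ∘ₗ F.lTensor (Module.Dual k V ⊗[k] Module.Dual k V) =
      psiTwo V B ∘ₗ G.lTensor (Module.Dual k V ⊗[k] Module.Dual k V)) : F = G := by
  apply LinearMap.ext; intro z
  have key : ∀ hh : Module.Dual k V ⊗[k] Module.Dual k V,
      psiTwo V B (hh ⊗ₜ F z) = psiTwo V B (hh ⊗ₜ G z) := by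
    intro hh
    have := LinearMap.congr_fun h (hh ⊗ₜ z)
    simpa only [LinearMap.comp_apply, LinearMap.lTensor_tmul] using this
  have hz : ∀ g : Module.Dual k (V ⊗[k] V),
      psiAux (V ⊗[k] V) B (g ⊗ₜ (F z - G z)) = 0 := by
    intro g
    have hk := key ((TensorProduct.dualDistribEquiv k V V).symm g)
    rw [psiTwo_tmul, psiTwo_tmul, LinearEquiv.apply_symm_apply] at hk
    rw [tmul_sub, map_sub, hk, sub_self]
  have h0 := psiAux_eq_zero (V ⊗[k] V) B _ hz
  exact sub_eq_zero.mp h0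

end Main



/-- For a finite-dimensional braided vector space `(V, R)` and a coaction
`c : V → V ⊗ B` of a bialgebra `B`, the coaction is admissible (`(R ⊗ id_B) ∘ c₂ = c₂ ∘ R`)
if and only if `m_B ∘ (φ ⊗ φ) ∘ α = m_B ∘ (φ ⊗ φ) ∘ β`. -/
theorem coaction_admissible_iff
    (V : Type u) [AddCommGroup V] [Module k V] [FiniteDimensional k V]
    (R : V ⊗[k] V →ₗ[k] V ⊗[k] V) (hRbij : Function.Bijective R)
    (hRbraid : SatisfiesBraidEquation R)
    (B : Type u) [Ring B] [Bialgebra k B]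
    (c : V →ₗ[k] V ⊗[k] B)
    (hco : (TensorProduct.assoc k V B B).toLinearMap ∘ₗ c.rTensor B ∘ₗ c =
      (Coalgebra.comul (R := k) (A := B)).lTensor V ∘ₗ c)
    (hcu : (TensorProduct.rid k V).toLinearMap ∘ₗ
      (Coalgebra.counit (R := k) (A := B)).lTensor V ∘ₗ c = LinearMap.id) :
    (R.rTensor B ∘ₗ coactionSq V B c = coactionSq V B c ∘ₗ R) ↔
      (LinearMap.mul' k B ∘ₗ
          TensorProduct.map (coactionPhi V B c) (coactionPhi V B c) ∘ₗ alphaMap V R =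
        LinearMap.mul' k B ∘ₗ
          TensorProduct.map (coactionPhi V B c) (coactionPhi V B c) ∘ₗ betaMap V R) := by
  have hA : ∀ z, LinearMap.mul' k B (TensorProduct.map (coactionPhi V B c) (coactionPhi V B c)
      (alphaMap V R z)) =
      psiTwo V B ((R.rTensor B ∘ₗ coactionSq V B c).lTensor
        (Module.Dual k V ⊗[k] Module.Dual k V) (midSwap V z)) := by
    intro z
    have h1 := LinearMap.congr_fun (L1 V B c)
      ((braidTranspose V R).rTensor (V ⊗[k] V) (midSwap V z))
    simp only [LinearMap.comp_apply, LinearEquiv.coe_coe] at h1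
    have hcomm := (LinearMap.lTensor_comp_rTensor (f := braidTranspose V R)
        (g := coactionSq V B c)).trans
      (LinearMap.rTensor_comp_lTensor (f := braidTranspose V R) (g := coactionSq V B c)).symm
    have h2 := LinearMap.congr_fun hcomm (midSwap V z)
    simp only [LinearMap.comp_apply] at h2
    have h3 := LinearMap.congr_fun (L2 V B R)
      ((coactionSq V B c).lTensor (Module.Dual k V ⊗[k] Module.Dual k V) (midSwap V z))
    simp only [LinearMap.comp_apply] at h3
    rw [alphaMap]
    simp only [LinearMap.comp_apply, LinearEquiv.coe_coe, LinearMap.lTensor_comp]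
    rw [h1, h2]
    exact h3
  have hB : ∀ z, LinearMap.mul' k B (TensorProduct.map (coactionPhi V B c) (coactionPhi V B c)
      (betaMap V R z)) =
      psiTwo V B ((coactionSq V B c ∘ₗ R).lTensor
        (Module.Dual k V ⊗[k] Module.Dual k V) (midSwap V z)) := by
    intro z
    have h1 := LinearMap.congr_fun (L1 V B c)
      (R.lTensor (Module.Dual k V ⊗[k] Module.Dual k V) (midSwap V z))
    simp only [LinearMap.comp_apply, LinearEquiv.coe_coe] at h1
    rw [betaMap]
    simp only [LinearMap.comp_apply, LinearEquiv.coe_coe, LinearMap.lTensor_comp]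
    exact h1
  constructor
  · intro hadm
    apply LinearMap.ext; intro z
    simp only [LinearMap.comp_apply]
    rw [hA z, hB z, hadm]
  · intro heq
    apply L3
    apply LinearMap.ext; intro w
    have hw : midSwap V ((midSwap V).symm w) = w := (midSwap V).apply_symm_apply w
    have h1 := hA ((midSwap V).symm w)
    have h2 := hB ((midSwap V).symm w)
    rw [hw] at h1 h2
    have h3 := LinearMap.congr_fun heq ((midSwap V).symm w)
    simp only [LinearMap.comp_apply] at h3 ⊢
    rw [← h1, ← h2]
    exact h3
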